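/- arXiv:2512.18278 — 2 statements merged into one kernel-verified Lean document; each statement's English description precedes it below -/
import Mathlib

section
/- If a vector field b : ℝ^d → ℝ^d is eventually strictly monotone, i.e. there exist R > 0, η > 0, λ > 0 such that ⟨b(x) − b(y), x − y⟩ ≤ η|x−y|² whenever |x|+|y| < R and ⟨b(x) − b(y), x − y⟩ ≤ −λ|x−y|² whenever |x|+|y| ≥ R, then there exists a constant C > 0 such that ⟨b(x), x⟩ ≤ −(λ/2)|x|² + C for all x ∈ ℝ^d. -/
/-!
Split `⟪b x, x⟫ = ⟪b x - b 0, x⟫ + ⟪b 0, x⟫` and bound the last term by `‖b 0‖ ‖x‖`.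
Outside the ball of radius `R` the monotonicity gives `-λ‖x‖²`, and half of it absorbs the
linear term `‖b 0‖ ‖x‖` (AM-GM); inside the ball everything is bounded by a constant.
-/

open scoped RealInnerProductSpace

variable {E : Type*} [NormedAddCommGroup E] [InnerProductSpace ℝ E]

lemma mul_sub_half_mul_sq_le {B lam : ℝ} (hlam : 0 < lam) (t : ℝ) :
    B * t - lam / 2 * t ^ 2 ≤ B ^ 2 / (2 * lam) := by
  rw [le_div_iff₀ (by positivity)]
  nlinarith [sq_nonneg (lam * t - B)]

lemma inner_apply_le_inner_sub_apply_zero_add (b : E → E) (x : E) :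
    ⟪b x, x⟫ ≤ ⟪b x - b 0, x⟫ + ‖b 0‖ * ‖x‖ := by
  rw [inner_sub_left]
  linarith [real_inner_le_norm (b 0) x]

lemma inner_apply_le_of_inner_sub_apply_zero_le_neg {b : E → E} {lam : ℝ} (hlam : 0 < lam)
    {x : E} (hx : ⟪b x - b 0, x⟫ ≤ -lam * ‖x‖ ^ 2) :
    ⟪b x, x⟫ ≤ -(lam / 2) * ‖x‖ ^ 2 + ‖b 0‖ ^ 2 / (2 * lam) := by
  linarith [inner_apply_le_inner_sub_apply_zero_add b x,
    mul_sub_half_mul_sq_le (B := ‖b 0‖) hlam ‖x‖]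

lemma inner_apply_le_of_norm_le {b : E → E} {R η lam : ℝ} (hη : 0 ≤ η) (hlam : 0 ≤ lam)
    {x : E} (hxR : ‖x‖ ≤ R) (hx : ⟪b x - b 0, x⟫ ≤ η * ‖x‖ ^ 2) :
    ⟪b x, x⟫ ≤ -(lam / 2) * ‖x‖ ^ 2 + ((lam / 2 + η) * R ^ 2 + ‖b 0‖ * R) := by
  have hsq : ‖x‖ ^ 2 ≤ R ^ 2 := pow_le_pow_left₀ (norm_nonneg x) hxR 2
  have hlin : ‖b 0‖ * ‖x‖ ≤ ‖b 0‖ * R := mul_le_mul_of_nonneg_left hxR (norm_nonneg _)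
  nlinarith [inner_apply_le_inner_sub_apply_zero_add b x]

theorem eventually_strictly_monotone_dissipative_general
    (d : ℕ) (b : EuclideanSpace ℝ (Fin d) → EuclideanSpace ℝ (Fin d))
    (R η lam : ℝ) (hη : 0 < η) (hlam : 0 < lam)
    (h1 : ∀ x y : EuclideanSpace ℝ (Fin d), ‖x‖ + ‖y‖ < R →
      ⟪b x - b y, x - y⟫ ≤ η * ‖x - y‖ ^ 2)
    (h2 : ∀ x y : EuclideanSpace ℝ (Fin d), R ≤ ‖x‖ + ‖y‖ →
      ⟪b x - b y, x - y⟫ ≤ -lam * ‖x - y‖ ^ 2) :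
    ∃ C > 0, ∀ x : EuclideanSpace ℝ (Fin d),
      ⟪b x, x⟫ ≤ -(lam / 2) * ‖x‖ ^ 2 + C := by
  set C_in := (lam / 2 + η) * R ^ 2 + ‖b 0‖ * R
  set C_out := ‖b 0‖ ^ 2 / (2 * lam)
  refine ⟨max C_in C_out + 1, by positivity, fun x => ?_⟩
  rcases lt_or_ge ‖x‖ R with hx | hx
  · have hbx : ⟪b x, x⟫ ≤ -(lam / 2) * ‖x‖ ^ 2 + C_in :=
      inner_apply_le_of_norm_le hη.le hlam.le hx.le
        (by simpa using h1 x 0 (by simpa using hx))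
    linarith [le_max_left C_in C_out]
  · have hbx : ⟪b x, x⟫ ≤ -(lam / 2) * ‖x‖ ^ 2 + C_out :=
      inner_apply_le_of_inner_sub_apply_zero_le_neg hlam
        (by simpa using h2 x 0 (by simpa using hx))
    linarith [le_max_right C_in C_out]

/-- an eventually strictly monotone vector field satisfies
`⟪b x, x⟫ ≤ -(λ/2)‖x‖² + C` for some `C > 0`. -/
theorem eventually_strictly_monotone_dissipative
    (d : ℕ) (b : EuclideanSpace ℝ (Fin d) → EuclideanSpace ℝ (Fin d))
    (R η lam : ℝ) (hR : 0 < R) (hη : 0 < η) (hlam : 0 < lam)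
    (h1 : ∀ x y : EuclideanSpace ℝ (Fin d), ‖x‖ + ‖y‖ < R →
      ⟪b x - b y, x - y⟫ ≤ η * ‖x - y‖ ^ 2)
    (h2 : ∀ x y : EuclideanSpace ℝ (Fin d), R ≤ ‖x‖ + ‖y‖ →
      ⟪b x - b y, x - y⟫ ≤ -lam * ‖x - y‖ ^ 2) :
    ∃ C > 0, ∀ x : EuclideanSpace ℝ (Fin d),
      ⟪b x, x⟫ ≤ -(lam / 2) * ‖x‖ ^ 2 + C :=
  eventually_strictly_monotone_dissipative_general d b R η lam hη hlam h1 h2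
end

section
/- Let (E,d) be a metric space, A a random compact set and z ∈ E a point such that for every R > 0 there is t₀ > 0 with P(φ_{t₀}(·, B(z,R)) ⊆ B(z, R/2)) > 0 (strong recurrence at z), where φ is a white-noise RDS so that the events {A ⊆ B(z,R)} ∈ F₀ and {φ_{t₀}(·,B(z,R)) ⊆ B(z,R/2)} ∈ F_{0,t₀} are independent, and A is φ-invariant: A(θ_{t}ω) = φ_t(ω, A(ω)). Then for every ε > 0, P(A ⊆ B(z, ε)) > 0. -/
open MeasureTheory Metric

/-!
If `A ⊆ B(z, r)` and `φ_{t₀}` maps `B(z, r)` into `B(z, r/2)`, then by invariance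
`A(θ_{t₀}ω) ⊆ B(z, r/2)`. By independence the joint event has positive probability, and since
`θ_{t₀}` preserves `P`, so does `{A ⊆ B(z, r/2)}`. Halving the radius finitely often reaches any
`ε > 0`.
-/

theorem forall_pos_of_halving {Q : ℝ → Prop} (hmono : ∀ ⦃r s⦄, r ≤ s → Q r → Q s)
    {r₀ : ℝ} (hr₀ : 0 < r₀) (hQ₀ : Q r₀) (hhalf : ∀ r > 0, Q r → Q (r / 2)) :
    ∀ ε > 0, Q ε := by
  have hpow : ∀ n : ℕ, Q (r₀ / 2 ^ n) := by
    intro n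
    induction n with
    | zero => simpa using hQ₀
    | succ n ih => simpa [pow_succ, div_div] using hhalf _ (by positivity) ih
  intro ε hε
  obtain ⟨n, hn⟩ := pow_unbounded_of_one_lt (r₀ / ε) one_lt_two
  refine hmono ?_ (hpow n)
  rw [div_le_iff₀ (by positivity)]
  rw [div_lt_iff₀ hε] at hn
  linarith

theorem measure_subset_pos_of_mapsTo {Ω E : Type*} [MeasurableSpace Ω] {P : Measure Ω}
    {f : Ω → Ω} (hf : MeasurePreserving f P P) {g : Ω → E → E} {A : Ω → Set E}
    (hinv : ∀ ω, A (f ω) = g ω '' A ω) {U V : Set E}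
    (hindep : P ({ω | A ω ⊆ U} ∩ {ω | Set.MapsTo (g ω) U V})
      = P {ω | A ω ⊆ U} * P {ω | Set.MapsTo (g ω) U V})
    (hA : 0 < P {ω | A ω ⊆ U}) (hg : 0 < P {ω | Set.MapsTo (g ω) U V}) :
    0 < P {ω | A ω ⊆ V} := by
  have hjoint : {ω | A ω ⊆ U} ∩ {ω | Set.MapsTo (g ω) U V} ⊆ f ⁻¹' {ω | A ω ⊆ V} := by
    rintro ω ⟨hAU, hgUV⟩
    show A (f ω) ⊆ V
    rw [hinv ω]
    exact (hgUV.mono_left hAU).image_subset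
  calc 0 < P ({ω | A ω ⊆ U} ∩ {ω | Set.MapsTo (g ω) U V}) := by
        rw [hindep]; exact ENNReal.mul_pos hA.ne' hg.ne'
    _ ≤ P (f ⁻¹' {ω | A ω ⊆ V}) := measure_mono hjoint
    _ ≤ P {ω | A ω ⊆ V} := hf.measure_preimage_le _

theorem strong_recurrence_attractor_small_general
    (Ω : Type*) [MeasurableSpace Ω] (P : Measure Ω)
    (E : Type*) [MetricSpace E] (z : E)
    (θ : ℝ → Ω → Ω) (hθ : ∀ t, MeasurePreserving (θ t) P P)
    (φ : ℝ → Ω → E → E) (A : Ω → Set E)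
    (hA0 : ∃ r₀ > (0:ℝ), 0 < P {ω | A ω ⊆ ball z r₀})
    -- invariance of `A` under the cocycle
    (hinv : ∀ t ≥ (0:ℝ), ∀ ω, A (θ t ω) = φ t ω '' A ω)
    -- strong recurrence at `z`
    (hrec : ∀ R > (0:ℝ), ∃ t₀ > (0:ℝ),
      0 < P {ω | ∀ x ∈ ball z R, φ t₀ ω x ∈ ball z (R/2)})
    -- independence of the past event `{A ⊆ B(z,r)}` and the future event
    -- `{φ_t(·, B(z,r)) ⊆ B(z, r/2)}`
    (hindep : ∀ r > (0:ℝ), ∀ t > (0:ℝ),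
      P ({ω | A ω ⊆ ball z r} ∩ {ω | ∀ x ∈ ball z r, φ t ω x ∈ ball z (r/2)})
        = P {ω | A ω ⊆ ball z r} * P {ω | ∀ x ∈ ball z r, φ t ω x ∈ ball z (r/2)}) :
    ∀ ε > (0:ℝ), 0 < P {ω | A ω ⊆ ball z ε} := by
  obtain ⟨r₀, hr₀, hP₀⟩ := hA0
  refine forall_pos_of_halving (fun r s hrs hr => ?_) hr₀ hP₀ fun r hr hPr => ?_
  · exact hr.trans_le <| measure_mono fun ω hω => hω.trans (ball_subset_ball hrs)
  · obtain ⟨t₀, ht₀, hrecP⟩ := hrec r hr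
    exact measure_subset_pos_of_mapsTo (hθ t₀) (hinv t₀ ht₀.le) (hindep r hr t₀ ht₀) hPr hrecP

/-- if a `φ`-invariant random compact set `A` is inside some ball
around `z` with positive probability, `φ` is strongly recurrent at `z`, and the
relevant events are independent (white noise structure), then for every `ε > 0`
the attractor is inside `B(z, ε)` with positive probability. -/
theorem strong_recurrence_attractor_small
    (Ω : Type*) [MeasurableSpace Ω] (P : Measure Ω) [IsProbabilityMeasure P]
    (E : Type*) [MetricSpace E] (z : E)
    (θ : ℝ → Ω → Ω) (hθ : ∀ t, MeasurePreserving (θ t) P P)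
    (φ : ℝ → Ω → E → E) (A : Ω → Set E)
    -- `A` is a random compact set starting inside some ball with positive probability
    (hAcpt : ∀ ω, IsCompact (A ω))
    (hA0 : ∃ r₀ > (0:ℝ), 0 < P {ω | A ω ⊆ ball z r₀})
    -- invariance of `A` under the cocycle
    (hinv : ∀ t ≥ (0:ℝ), ∀ ω, A (θ t ω) = φ t ω '' A ω)
    -- strong recurrence at `z`
    (hrec : ∀ R > (0:ℝ), ∃ t₀ > (0:ℝ),
      0 < P {ω | ∀ x ∈ ball z R, φ t₀ ω x ∈ ball z (R/2)})
    -- independence of the past event `{A ⊆ B(z,r)}` and the future event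
    -- `{φ_t(·, B(z,r)) ⊆ B(z, r/2)}`
    (hindep : ∀ r > (0:ℝ), ∀ t > (0:ℝ),
      P ({ω | A ω ⊆ ball z r} ∩ {ω | ∀ x ∈ ball z r, φ t ω x ∈ ball z (r/2)})
        = P {ω | A ω ⊆ ball z r} * P {ω | ∀ x ∈ ball z r, φ t ω x ∈ ball z (r/2)}) :
    ∀ ε > (0:ℝ), 0 < P {ω | A ω ⊆ ball z ε} :=
  strong_recurrence_attractor_small_general Ω P E z θ hθ φ A hA0 hinv hrec hindep
end
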